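/- arXiv:1212.6186 — 6 statements merged into one kernel-verified Lean document; each statement's English description precedes it below -/
import Mathlib

section
/- Let k be an algebraically closed field, r ≥ 0 an integer, and X = ℙ(O_{ℙ¹}(−1) ⊕ O_{ℙ¹}^r) the projective bundle over ℙ¹_k with natural projection π : X → ℙ¹. Then the complete linear system |Γ(X, O_X(1) ⊗ π^*O_{ℙ¹}(1))| is base point free, and the only curve contracted by the induced morphism of X is the curve C which is the section of π defined by the projection of O_{ℙ¹}(−1) ⊕ O_{ℙ¹}^r onto its first factor. -/
/-!
Lemma `\ref{Lemma52}` of Cutkosky, "The asymptotic growth of graded linear series on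
arbitrary projective schemes":

Let `k` be an algebraically closed field, `r ≥ 0`, and let
`X = ℙ(O_{ℙ¹}(-1) ⊕ O_{ℙ¹}^r)` with natural projection `π : X → ℙ¹`.  Then the complete
linear system `|Γ(X, O_X(1) ⊗ π^*O_{ℙ¹}(1))|` is base point free, and the only curve
contracted by the induced morphism of `X` is the curve `C` which is the section of `π`
defined by the projection of `O_{ℙ¹}(-1) ⊕ O_{ℙ¹}^r` onto the first factor.

Formalization via the Cox ring (homogeneous coordinate) description of the projective
bundle `X = ℙ(O(-1) ⊕ O^r)` over `ℙ¹`:  `X` is the quotient of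
`{((s,t),(y₀,y₁,…,y_r)) | (s,t) ≠ 0, (y₀,…,y_r) ≠ 0} ⊆ k² × k^{1+r}`
by the torus action `(λ,μ)·((s,t),(y₀,y)) = ((λs, λt), (λμ y₀, μ y))`
(the coordinates `s,t` on the base have bidegree `(1,0)`; `y₀`, corresponding to the
summand `O(-1)`, has bidegree `(1,1)`, and `y₁,…,y_r`, corresponding to `O^r`, have
bidegree `(0,1)`); `k`-points of `X` are exactly the orbits, as `k` is algebraically
closed.  The space `Γ(X, O_X(1) ⊗ π^*O_{ℙ¹}(1))` of sections of bidegree `(1,1)` has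
basis `y₀, s·y₁, t·y₁, …, s·y_r, t·y_r`, so the morphism `φ` induced by the complete
linear system sends (the orbit of) `p = ((s,t),(y₀,y))` to the point of `ℙ^{2r}` with
homogeneous coordinates `coxPhi p = (y₀, (s y₁, t y₁), …, (s y_r, t y_r))`.  The section
`C` of `π` defined by the projection onto the first factor `O(-1)` is the locus
`{y₁ = ⋯ = y_r = 0}`.

The conclusion is:
(i)  (base point freeness) `coxPhi p ≠ 0` for every point `p` of `X`, and
(ii) (`C` is the only contracted curve) `φ` identifies two points of `X` if and only if
     they are equal or both lie on `C`; that is, `φ` is injective off `C` and contracts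
     `C` (and only `C`) to a point.
-/

namespace ArxivGLS

/-- A point of the total space of the Cox construction of `ℙ(O(-1) ⊕ O^r)` over `ℙ¹`:
base coordinates `(s,t)` and fiber coordinates `(y₀, (y₁,…,y_r))`. -/
abbrev CoxPt (k : Type) (r : ℕ) : Type := (k × k) × (k × (Fin r → k))

/-- Two points of the punctured total space lie in the same orbit of the torus action,
i.e. define the same point of `X = ℙ(O(-1) ⊕ O^r)`. -/
def coxEquiv {k : Type} [Field k] {r : ℕ} (p p' : CoxPt k r) : Prop :=
  ∃ lam mu : kˣ,
    p'.1.1 = lam * p.1.1 ∧ p'.1.2 = lam * p.1.2 ∧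
    p'.2.1 = lam * mu * p.2.1 ∧ ∀ i, p'.2.2 i = mu * p.2.2 i

/-- The tuple of values of the basis `y₀, s y₁, t y₁, …, s y_r, t y_r` of the complete
linear system `|Γ(X, O_X(1) ⊗ π^*O_{ℙ¹}(1))|`: the homogeneous coordinates of the image
of `p` under the induced morphism `φ : X → ℙ^{2r}`. -/
def coxPhi {k : Type} [Field k] {r : ℕ} (p : CoxPt k r) : k × (Fin r → k × k) :=
  (p.2.1, fun i => (p.1.1 * p.2.2 i, p.1.2 * p.2.2 i))

/-- Two nonzero tuples of homogeneous coordinates define the same point of `ℙ^{2r}`,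
i.e. they are proportional. -/
def projEq {k : Type} [Field k] {r : ℕ} (w w' : k × (Fin r → k × k)) : Prop :=
  ∃ c : kˣ, w'.1 = c * w.1 ∧
    ∀ i, (w'.2 i).1 = c * (w.2 i).1 ∧ (w'.2 i).2 = c * (w.2 i).2

/-!
Writing the second block of `coxPhi p` as the family `yᵢ • (s, t)`, everything follows from
`(s, t) ≠ 0`: an equation `a • (s, t) = b • (s, t)` forces `a = b`.  If some `yᵢ ≠ 0`, a
proportionality `coxPhi p' = c • coxPhi p` first makes `(s', t')` a multiple `λ • (s, t)`, then
`y' = μ • y` with `λ μ = c`, which is a torus element relating `p` and `p'`.  If `y = 0`, it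
forces `y' = 0`, and conversely all points of `C` have image `(y₀, 0)`.
-/

variable {k : Type} [Field k] {r : ℕ}

lemma coxPhi_snd_apply (p : CoxPt k r) (i : Fin r) : (coxPhi p).2 i = p.2.2 i • p.1 := by
  simp only [coxPhi, Prod.smul_def, smul_eq_mul, mul_comm]

lemma projEq_coxPhi_iff {p p' : CoxPt k r} :
    projEq (coxPhi p) (coxPhi p') ↔
      ∃ c : kˣ, p'.2.1 = c * p.2.1 ∧ ∀ i, p'.2.2 i • p'.1 = (c * p.2.2 i) • p.1 := by
  simp only [projEq, coxPhi_snd_apply, Prod.ext_iff, Prod.smul_fst, Prod.smul_snd, smul_eq_mul,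
    mul_assoc]
  rfl

lemma coxEquiv_iff {p p' : CoxPt k r} :
    coxEquiv p p' ↔ ∃ lam mu : kˣ,
      p'.1 = (lam : k) • p.1 ∧ p'.2.1 = lam * mu * p.2.1 ∧ p'.2.2 = (mu : k) • p.2.2 := by
  simp only [coxEquiv, Prod.ext_iff, funext_iff, Prod.smul_fst, Prod.smul_snd, Pi.smul_apply,
    smul_eq_mul, and_assoc]

lemma coxPhi_ne_zero {p : CoxPt k r} (hb : p.1 ≠ 0) (hf : p.2 ≠ 0) : coxPhi p ≠ 0 := by
  intro h
  have hy : p.2.2 = 0 := funext fun i => by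
    have : p.2.2 i • p.1 = 0 := by rw [← coxPhi_snd_apply, h]; rfl
    exact (smul_eq_zero.mp this).resolve_right hb
  exact hf (Prod.ext (congrArg Prod.fst h :) hy)

lemma snd_snd_eq_zero_of_projEq_coxPhi {p p' : CoxPt k r} (hb' : p'.1 ≠ 0)
    (h : projEq (coxPhi p) (coxPhi p')) (hy : p.2.2 = 0) : p'.2.2 = 0 := by
  obtain ⟨c, -, h⟩ := projEq_coxPhi_iff.mp h
  funext i
  simpa [hy, hb'] using h i

lemma coxEquiv_of_projEq_coxPhi {p p' : CoxPt k r} (hb : p.1 ≠ 0)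
    (h : projEq (coxPhi p) (coxPhi p')) {i : Fin r} (hi : p.2.2 i ≠ 0) : coxEquiv p p' := by
  obtain ⟨c, h0, h⟩ := projEq_coxPhi_iff.mp h
  have hyi' : p'.2.2 i ≠ 0 := by
    intro h'
    simpa [h', hi, hb, eq_comm (a := (0 : k × k))] using h i
  have hbase : p'.1 = (c * p.2.2 i / p'.2.2 i) • p.1 := by
    rw [div_eq_inv_mul, mul_smul, ← h i, inv_smul_smul₀ hyi']
  have hfib : ∀ j, p'.2.2 j = p'.2.2 i / p.2.2 i * p.2.2 j := by
    intro j
    have hj := h j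
    rw [hbase, smul_smul] at hj
    have := smul_left_injective k hb hj
    field_simp at this ⊢
    linear_combination this
  have hc : (c : k) * p.2.2 i / p'.2.2 i * (p'.2.2 i / p.2.2 i) = c := by field_simp
  refine coxEquiv_iff.mpr ⟨.mk0 _ (by simp [hi, hyi']), .mk0 _ (div_ne_zero hyi' hi), hbase, ?_,
    funext hfib⟩
  simpa only [Units.val_mk0, hc] using h0

lemma projEq_coxPhi_of_coxEquiv {p p' : CoxPt k r} (h : coxEquiv p p') :
    projEq (coxPhi p) (coxPhi p') := by
  obtain ⟨lam, mu, hbase, hzero, hfib⟩ := coxEquiv_iff.mp h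
  refine projEq_coxPhi_iff.mpr ⟨lam * mu, by simpa using hzero, fun i => ?_⟩
  rw [hbase, hfib, Pi.smul_apply, smul_smul, smul_eq_mul, Units.val_mul]
  ring_nf

lemma projEq_coxPhi_of_snd_snd_eq_zero {p p' : CoxPt k r} (hf : p.2 ≠ 0) (hf' : p'.2 ≠ 0)
    (hy : p.2.2 = 0) (hy' : p'.2.2 = 0) : projEq (coxPhi p) (coxPhi p') := by
  have hy0 : p.2.1 ≠ 0 := fun h => hf (Prod.ext h hy)
  have hy0' : p'.2.1 ≠ 0 := fun h => hf' (Prod.ext h hy')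
  refine projEq_coxPhi_iff.mpr ⟨.mk0 _ (div_ne_zero hy0' hy0), by simp [hy0], fun i => ?_⟩
  simp [hy, hy']

theorem base_point_free_and_contracts_only_first_factor_section_general
    (k : Type) [Field k] (r : ℕ) :
    -- (i) the complete linear system is base point free
    (∀ p : CoxPt k r, p.1 ≠ 0 → p.2 ≠ 0 → coxPhi p ≠ 0) ∧
    -- (ii) the induced morphism identifies two points iff they are equal in `X`
    --      or both lie on the section `C = {y₁ = ⋯ = y_r = 0}` of `π` defined by the
    --      projection of `O(-1) ⊕ O^r` onto the first factor; in particular the only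
    --      curve contracted by the induced morphism is `C`.
    (∀ p p' : CoxPt k r, p.1 ≠ 0 → p.2 ≠ 0 → p'.1 ≠ 0 → p'.2 ≠ 0 →
      (projEq (coxPhi p) (coxPhi p') ↔
        (coxEquiv p p' ∨ (p.2.2 = 0 ∧ p'.2.2 = 0)))) := by
  refine ⟨fun p hb hf => coxPhi_ne_zero hb hf, fun p p' hb hf hb' hf' => ⟨fun h => ?_, ?_⟩⟩
  · by_cases hy : p.2.2 = 0
    · exact .inr ⟨hy, snd_snd_eq_zero_of_projEq_coxPhi hb' h hy⟩
    · obtain ⟨i, hi⟩ := Function.ne_iff.mp hy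
      exact .inl (coxEquiv_of_projEq_coxPhi hb h hi)
  · rintro (he | ⟨hy, hy'⟩)
    · exact projEq_coxPhi_of_coxEquiv he
    · exact projEq_coxPhi_of_snd_snd_eq_zero hf hf' hy hy'

theorem base_point_free_and_contracts_only_first_factor_section
    (k : Type) [Field k] [IsAlgClosed k] (r : ℕ) :
    -- (i) the complete linear system is base point free
    (∀ p : CoxPt k r, p.1 ≠ 0 → p.2 ≠ 0 → coxPhi p ≠ 0) ∧
    -- (ii) the induced morphism identifies two points iff they are equal in `X`
    --      or both lie on the section `C = {y₁ = ⋯ = y_r = 0}` of `π` defined by the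
    --      projection of `O(-1) ⊕ O^r` onto the first factor; in particular the only
    --      curve contracted by the induced morphism is `C`.
    (∀ p p' : CoxPt k r, p.1 ≠ 0 → p.2 ≠ 0 → p'.1 ≠ 0 → p'.2 ≠ 0 →
      (projEq (coxPhi p) (coxPhi p') ↔
        (coxEquiv p p' ∨ (p.2.2 = 0 ∧ p'.2.2 = 0)))) :=
  base_point_free_and_contracts_only_first_factor_section_general k r

end ArxivGLS
end

section
/- Let L be a graded linear series on a projective scheme X over a field k, and suppose q(L) ≥ 0. Then there exist a positive real constant α and a positive integer e such that dim_k L_{en} > α n^{q(L)} for all positive integers n. -/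
/-!
If `σ(L) = q + 1`, pick algebraically independent homogeneous `s₀, …, s_q ∈ L` of degrees
`d₀, …, d_q` and put `e = ∏ dⱼ`. The monomials `∏ sⱼ ^ ((e / dⱼ) aⱼ)` with `∑ aⱼ = n` all lie
in `L_{en}` and are linearly independent by algebraic independence, so
`dim L_{en} ≥ (q + n).choose n ≥ (n + 1)^q / q!`.
-/

open AlgebraicGeometry CategoryTheory Opposite TopologicalSpace Filter

universe u

namespace ArxivGLS

variable (k : Type u) [Field k]

/-- A scheme `X` over `Spec k` equipped with a line bundle `𝓛`, presented by a
Čech cocycle: an open cover `U i` of `X` together with transition units `g i j`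
on the double overlaps satisfying the cocycle condition.  A global section of the
`n`-th tensor power `𝓛^n` is then a family `s i ∈ Γ(X, U i)` satisfying
`s i = (g i j)^n * s j` on the overlaps (see `PolarizedScheme.H0`). -/
structure PolarizedScheme where
  /-- the underlying scheme -/
  X : Scheme.{u}
  /-- the structure morphism to `Spec k` -/
  f : X ⟶ Spec (CommRingCat.of k)
  /-- index set of the trivializing open cover of the line bundle -/
  ι : Type u
  /-- the trivializing open cover -/
  U : ι → X.Opens
  covers : ∀ x, ∃ i, x ∈ U i
  /-- the transition functions of the line bundle -/
  g : ∀ i j, Γ(X, U i ⊓ U j)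
  isUnit_g : ∀ i j, IsUnit (g i j)
  g_self : ∀ i, g i i = 1
  cocycle : ∀ i j l,
    (X.presheaf.map (homOfLE (inf_le_left : U i ⊓ U j ⊓ U l ≤ U i ⊓ U j)).op (g i j)) *
      (X.presheaf.map (homOfLE
        (inf_le_inf inf_le_right le_rfl : U i ⊓ U j ⊓ U l ≤ U j ⊓ U l)).op (g j l)) =
      (X.presheaf.map (homOfLE
        (inf_le_inf inf_le_left le_rfl : U i ⊓ U j ⊓ U l ≤ U i ⊓ U l)).op (g i l))

variable {k}

/-- The `k`-algebra structure on the sections of a scheme over `Spec k`. -/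
noncomputable instance (P : PolarizedScheme k) (V : P.X.Opens) : Algebra k Γ(P.X, V) :=
  RingHom.toAlgebra
    ((Scheme.ΓSpecIso (CommRingCat.of k)).inv ≫ P.f.appTop ≫
      P.X.presheaf.map (homOfLE le_top).op).hom

/-- The ambient space in which all the `Γ(X, 𝓛^n)` live: families of local sections
on the trivializing cover. -/
abbrev SecSpace (P : PolarizedScheme k) : Type u := Π i, Γ(P.X, P.U i)

/-- The set of global sections of `𝓛^n`: families of local sections compatible via
the `n`-th power of the transition cocycle. This is `Γ(X, 𝓛^n)`. -/
def PolarizedScheme.H0 (P : PolarizedScheme k) (n : ℕ) : Set (SecSpace P) :=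
  {s | ∀ i j,
    P.X.presheaf.map (homOfLE (inf_le_left : P.U i ⊓ P.U j ≤ P.U i)).op (s i) =
      P.g i j ^ n *
        P.X.presheaf.map (homOfLE (inf_le_right : P.U i ⊓ P.U j ≤ P.U j)).op (s j)}

/-- A graded linear series for the line bundle `𝓛` on `X`: a graded `k`-subalgebra
`L = ⊕ₙ Lₙ` of the section ring `⊕ₙ Γ(X, 𝓛^n)`. Each graded piece is a
finite-dimensional `k`-vector space since `X` is projective over `k`. -/
structure GradedLinearSeries (P : PolarizedScheme k) where
  /-- the `n`-th graded piece `Lₙ ⊆ Γ(X, 𝓛^n)` -/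
  M : ℕ → Submodule k (SecSpace P)
  le_H0 : ∀ n, (M n : Set (SecSpace P)) ⊆ P.H0 n
  one_mem : (1 : SecSpace P) ∈ M 0
  mul_mem : ∀ {m n : ℕ} {x y : SecSpace P}, x ∈ M m → y ∈ M n → x * y ∈ M (m + n)
  finiteDimensional : ∀ n, FiniteDimensional k (M n)

namespace GradedLinearSeries

variable {P : PolarizedScheme k} (G : GradedLinearSeries P)

/-- A homogeneous element of positive degree `n` of the graded linear series, viewed in
the ambient graded algebra `(⊕ᵢ Γ(X, U i))[T]` (an element `s ∈ Lₙ` is encoded as the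
polynomial `s · Tⁿ`, which is compatible with the multiplication of the section ring). -/
def IsHomogeneousOfPosDeg (p : Polynomial (SecSpace P)) : Prop :=
  ∃ n : ℕ, 0 < n ∧ ∃ s ∈ G.M n, p = Polynomial.C s * Polynomial.X ^ n

/-- `σ(L)` : the maximal number of homogeneous elements of positive degree of `L` which
are algebraically independent over `k`. -/
noncomputable def sigma : ℕ :=
  sSup {m : ℕ | ∃ v : Fin m → Polynomial (SecSpace P),
    (∀ j, G.IsHomogeneousOfPosDeg (v j)) ∧ AlgebraicIndependent k v}

/-- The Kodaira–Iitaka dimension `q(L)`: it is `σ(L) - 1` if `σ(L) > 0`, and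
`-∞` if `σ(L) = 0`. -/
noncomputable def kodairaIitakaDim : WithBot ℕ∞ :=
  if sigma G = 0 then ⊥ else ((sigma G - 1 : ℕ) : ℕ∞)

/-- The index `m(L) = [ℤ : G]` where `G` is the subgroup of `ℤ` generated by
`{n | Lₙ ≠ 0}`. -/
noncomputable def gindex : ℕ :=
  (AddSubgroup.closure {z : ℤ | ∃ n : ℕ, (n : ℤ) = z ∧ G.M n ≠ ⊥}).index

end GradedLinearSeries

end ArxivGLS

open Polynomial

theorem AlgebraicIndependent.linearIndependent_prod_pow {R A ι : Type*} [CommRing R]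
    [CommRing A] [Algebra R A] {v : ι → A} (hv : AlgebraicIndependent R v) :
    LinearIndependent R fun D : ι →₀ ℕ => D.prod fun j c => v j ^ c := by
  have := (MvPolynomial.basisMonomials ι R).linearIndependent.map'
    (MvPolynomial.aeval v).toLinearMap (LinearMap.ker_eq_bot.mpr hv)
  simpa [Function.comp_def, MvPolynomial.aeval_monomial] using this

theorem linearIndependent_prod_pow_of_algebraicIndependent_C_mul_X_pow {K R ι α : Type*}
    [CommRing K] [CommRing R] [Algebra K R] [Fintype ι] {s : ι → R} {d : ι → ℕ}
    (hind : AlgebraicIndependent K fun j => C (s j) * X ^ d j) {D : α → ι → ℕ}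
    (hD : Function.Injective D) {N : ℕ} (hN : ∀ a, ∑ j, D a j * d j = N) :
    LinearIndependent K fun a => ∏ j, s j ^ D a j := by
  have hmono := hind.linearIndependent_prod_pow.comp _
    (Finsupp.equivFunOnFinite.symm.injective.comp hD)
  have hcoeff : ((fun D : ι →₀ ℕ => D.prod fun j c => (C (s j) * X ^ d j) ^ c) ∘
      Finsupp.equivFunOnFinite.symm ∘ D) =
      (monomial N).restrictScalars K ∘ fun a => ∏ j, s j ^ D a j := by
    ext1 a
    rw [Function.comp_apply, Finsupp.prod_fintype _ _ fun _ => pow_zero _]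
    simp only [Function.comp_apply, Finsupp.coe_equivFunOnFinite_symm, mul_pow, ← C_pow,
      ← pow_mul, Finset.prod_mul_distrib, ← map_prod, Finset.prod_pow_eq_pow_sum]
    simp_rw [mul_comm (d _), hN]
    rw [C_mul_X_pow_eq_monomial]
    rfl
  exact (hcoeff ▸ hmono).of_comp _

theorem Nat.pow_div_two_mul_factorial_lt_choose {n : ℕ} (hn : 0 < n) (q : ℕ) :
    (n : ℝ) ^ q / (2 * q.factorial) < (q + n).choose n := by
  have hfact : (1 : ℝ) ≤ q.factorial := mod_cast q.factorial_pos
  have hbound := Nat.pow_le_choose (α := ℝ) q (q + n)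
  rw [show q + n + 1 - q = n + 1 by omega, Nat.choose_symm_add] at hbound
  calc (n : ℝ) ^ q / (2 * q.factorial) < n ^ q / q.factorial :=
        div_lt_div_of_pos_left (by positivity) (by positivity) (by linarith)
    _ ≤ (n + 1 : ℕ) ^ q / q.factorial := by gcongr; linarith
    _ ≤ (q + n).choose n := hbound

namespace ArxivGLS.GradedLinearSeries

variable {k : Type u} [Field k] {P : PolarizedScheme k} (G : GradedLinearSeries P)

theorem pow_mem {d : ℕ} {x : SecSpace P} (hx : x ∈ G.M d) (c : ℕ) : x ^ c ∈ G.M (c * d) := by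
  induction c with
  | zero => simpa using G.one_mem
  | succ c ih => simpa [pow_succ, add_mul] using G.mul_mem ih hx

theorem prod_pow_mem {ι : Type*} [Fintype ι] {s : ι → SecSpace P} {d : ι → ℕ}
    (hs : ∀ j, s j ∈ G.M (d j)) (c : ι → ℕ) : ∏ j, s j ^ c j ∈ G.M (∑ j, c j * d j) := by
  classical
  induction (Finset.univ : Finset ι) using Finset.induction with
  | empty => simpa using G.one_mem
  | insert j t hj ih =>
    rw [Finset.prod_insert hj, Finset.sum_insert hj]
    exact G.mul_mem (G.pow_mem (hs j) (c j)) ih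

theorem exists_algebraicIndependent (h : 0 < G.sigma) :
    ∃ v : Fin G.sigma → Polynomial (SecSpace P),
      (∀ j, G.IsHomogeneousOfPosDeg (v j)) ∧ AlgebraicIndependent k v := by
  set S := {m : ℕ | ∃ v : Fin m → Polynomial (SecSpace P),
    (∀ j, G.IsHomogeneousOfPosDeg (v j)) ∧ AlgebraicIndependent k v}
  change sSup S ∈ S
  change 0 < sSup S at h
  have hne : S.Nonempty := by
    by_contra hS
    rw [Set.not_nonempty_iff_eq_empty.mp hS, csSup_empty] at h
    exact not_lt_bot h
  have hbdd : BddAbove S := by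
    by_contra hS
    rw [csSup_of_not_bddAbove hS, csSup_empty] at h
    exact not_lt_bot h
  exact Nat.sSup_mem hne hbdd

theorem choose_le_finrank_of_algebraicIndependent {ι : Type*} [Fintype ι] [DecidableEq ι]
    {s : ι → SecSpace P} {d : ι → ℕ} (hd : ∀ j, 0 < d j) (hs : ∀ j, s j ∈ G.M (d j))
    (hind : AlgebraicIndependent k fun j => C (s j) * X ^ d j) (n : ℕ) :
    (Fintype.card ι + n - 1).choose n ≤ Module.finrank k (G.M ((∏ j, d j) * n)) := by
  set e := ∏ j, d j
  -- `m j = e / d j`, so that every `s j ^ m j` has degree `e`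
  set m : ι → ℕ := fun j => ∏ j' ∈ Finset.univ.erase j, d j'
  have hm : ∀ j, 0 < m j := fun j => Finset.prod_pos fun j' _ => hd j'
  have hmd : ∀ j, m j * d j = e := fun j => by
    rw [mul_comm]; exact Finset.mul_prod_erase _ _ (Finset.mem_univ j)
  let D : Sym ι n → ι → ℕ := fun a j => m j * (a : Multiset ι).count j
  have hD : Function.Injective D := fun a b hab => Subtype.ext <| Multiset.ext.mpr fun j =>
    Nat.eq_of_mul_eq_mul_left (hm j) (congrFun hab j)
  have hdeg : ∀ a, ∑ j, D a j * d j = e * n := fun a => calc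
    ∑ j, D a j * d j = ∑ j, e * (a : Multiset ι).count j :=
      Finset.sum_congr rfl fun j _ => by rw [mul_right_comm, hmd]
    _ = e * n := by
      rw [← Finset.mul_sum, Multiset.sum_count_eq_card fun j _ => Finset.mem_univ j, Sym.card_coe]
  have hli := linearIndependent_prod_pow_of_algebraicIndependent_C_mul_X_pow hind hD hdeg
  have hmem : ∀ a, ∏ j, s j ^ D a j ∈ G.M (e * n) := fun a => hdeg a ▸ G.prod_pow_mem hs (D a)
  have := G.finiteDimensional (e * n)
  calc (Fintype.card ι + n - 1).choose n
      = Module.finrank k (Submodule.span k (Set.range fun a => ∏ j, s j ^ D a j)) := by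
        rw [finrank_span_eq_card hli, Sym.card_sym_eq_choose]
    _ ≤ Module.finrank k (G.M (e * n)) :=
        Submodule.finrank_mono (Submodule.span_le.mpr (Set.range_subset_iff.mpr hmem))

theorem exists_choose_le_finrank (h : 0 < G.sigma) :
    ∃ e, 0 < e ∧ ∀ n, (G.sigma + n - 1).choose n ≤ Module.finrank k (G.M (e * n)) := by
  obtain ⟨v, hv, hind⟩ := G.exists_algebraicIndependent h
  choose d hd s hs hvs using hv
  obtain rfl : v = fun j => C (s j) * X ^ d j := funext hvs
  refine ⟨∏ j, d j, Finset.prod_pos fun j _ => hd j, fun n => ?_⟩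
  simpa using G.choose_le_finrank_of_algebraicIndependent hd hs hind n

end ArxivGLS.GradedLinearSeries

namespace ArxivGLS

theorem const_mul_pow_lt_dim_general
    {k : Type u} [Field k] (P : PolarizedScheme k)
    (G : GradedLinearSeries P) (q : ℕ) (hq : G.sigma = q + 1) :
    ∃ α : ℝ, 0 < α ∧ ∃ e : ℕ, 0 < e ∧ ∀ n : ℕ, 1 ≤ n →
      α * (n : ℝ) ^ q < (Module.finrank k (G.M (e * n)) : ℝ) := by
  obtain ⟨e, he, hdim⟩ := G.exists_choose_le_finrank (by omega)
  refine ⟨(2 * q.factorial : ℝ)⁻¹, by positivity, e, he, fun n hn => ?_⟩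
  calc (2 * q.factorial : ℝ)⁻¹ * n ^ q = n ^ q / (2 * q.factorial) := inv_mul_eq_div _ _
    _ < (q + n).choose n := Nat.pow_div_two_mul_factorial_lt_choose hn q
    _ ≤ Module.finrank k (G.M (e * n)) := by
      have := hdim n
      rw [hq, Nat.add_right_comm, Nat.add_sub_cancel] at this
      exact_mod_cast this

theorem const_mul_pow_lt_dim
    {k : Type u} [Field k] (P : PolarizedScheme k) [IsProper P.f]
    (G : GradedLinearSeries P) (q : ℕ) (hq : G.sigma = q + 1) :
    ∃ α : ℝ, 0 < α ∧ ∃ e : ℕ, 0 < e ∧ ∀ n : ℕ, 1 ≤ n →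
      α * (n : ℝ) ^ q < (Module.finrank k (G.M (e * n)) : ℝ) :=
  const_mul_pow_lt_dim_general P G q hq

end ArxivGLS
end

section
/- With σ as defined from the sequence (i_j): for every a ∈ ℕ and every positive integer r, and for all m > 0 and ε > 0, there exists a positive integer n of the form n = a + br with b ∈ ℕ such that n > m and |σ(n)/n − 1/2| < ε. -/
/-!
Given `a`, `r`, `m`, `ε`, take `j` so large that `i j` exceeds `a`, `m` and `r / ε`, and let `n` be
the first term of `a + r ℕ` beyond `i j`. Then `i j < n ≤ i j + r < i (j + 1)`, so `σ n = i j / 2`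
and `|σ n / n - 1/2| = (n - i j) / (2 n) < r / i j < ε`.
-/

theorem exists_add_mul_mem_Ioc {a r x : ℕ} (hr : 0 < r) (hax : a ≤ x) :
    ∃ b, x < a + b * r ∧ a + b * r ≤ x + r :=
  ⟨(x - a) / r + 1, by have := Nat.lt_div_mul_add (a := x - a) hr; grind,
    by have := Nat.div_mul_le_self (x - a) r; grind⟩

theorem abs_div_two_div_sub_half_lt {x y r ε : ℝ} (hx : 0 < x) (hxy : x ≤ y) (hyr : y ≤ x + r)
    (hrε : r < ε * x) : |x / 2 / y - 1 / 2| < ε := by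
  have hy : 0 < y := hx.trans_le hxy
  have hdist : x / 2 / y - 1 / 2 = -((y - x) / (2 * y)) := by field_simp; ring
  rw [hdist, abs_neg, abs_of_nonneg (div_nonneg (by linarith) (by positivity)),
    div_lt_iff₀ (by positivity)]
  nlinarith

section Growth

variable {i : ℕ → ℕ} (higrow : ∀ j, 1 ≤ j → 2 ^ j * i j < i (j + 1))
include higrow

theorem two_pow_lt_of_growth (hipos : ∀ j, 1 ≤ j → 0 < i j) {j : ℕ} (hj : 1 ≤ j) :
    2 ^ j < i (j + 1) :=
  (Nat.le_mul_of_pos_right _ (hipos j hj)).trans_lt (higrow j hj)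

theorem two_mul_lt_of_growth {j : ℕ} (hj : 1 ≤ j) : 2 * i j < i (j + 1) :=
  (Nat.mul_le_mul_right _ (Nat.le_self_pow (by omega) 2)).trans_lt (higrow j hj)

end Growth

theorem sigma_ratio_near_half_general (i σ : ℕ → ℕ)
    (hipos : ∀ j, 1 ≤ j → 0 < i j)
    (hieven : ∀ j, 1 ≤ j → Even (i (j + 1)))
    (higrow : ∀ j, 1 ≤ j → 2 ^ j * i j < i (j + 1))
    (hσ : ∀ j n, 1 ≤ j → i j ≤ n → n < i (j + 1) → σ n = i j / 2)
    (a : ℕ) (r : ℕ) (hr : 0 < r) (m : ℕ) (ε : ℝ) (hε : 0 < ε) :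
    ∃ b : ℕ, m < a + b * r ∧
      |(σ (a + b * r) : ℝ) / (a + b * r) - 1 / 2| < ε := by
  obtain ⟨M, hM⟩ := exists_nat_gt (r / ε)
  set k := a + m + r + M + 1
  have hk : k < i (k + 1) :=
    Nat.lt_two_pow_self.trans (two_pow_lt_of_growth higrow hipos (by omega))
  obtain ⟨b, hlo, hhi⟩ := exists_add_mul_mem_Ioc hr (show a ≤ i (k + 1) by omega)
  have hblock : a + b * r < i (k + 1 + 1) := by
    have := two_mul_lt_of_growth higrow (j := k + 1) (by omega)
    omega
  refine ⟨b, by omega, ?_⟩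
  have hrε : (r : ℝ) < ε * i (k + 1) := by
    rw [div_lt_iff₀ hε] at hM
    have : (M : ℝ) < i (k + 1) := by exact_mod_cast (show M < i (k + 1) by omega)
    nlinarith
  rw [hσ (k + 1) _ (by omega) hlo.le hblock,
    Nat.cast_div (hieven k (by omega)).two_dvd two_ne_zero]
  exact_mod_cast abs_div_two_div_sub_half_lt (by exact_mod_cast hipos (k + 1) (by omega))
    (by exact_mod_cast hlo.le) (by exact_mod_cast hhi) hrε

theorem sigma_ratio_near_half (i σ : ℕ → ℕ)
    (hipos : ∀ j, 1 ≤ j → 0 < i j)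
    (hi1 : i 1 = 2)
    (hieven : ∀ j, 1 ≤ j → Even (i (j + 1)))
    (higrow : ∀ j, 1 ≤ j → 2 ^ j * i j < i (j + 1))
    (hσ1 : σ 1 = 1)
    (hσ : ∀ j n, 1 ≤ j → i j ≤ n → n < i (j + 1) → σ n = i j / 2)
    (a : ℕ) (r : ℕ) (hr : 0 < r) (m : ℕ) (hm : 0 < m) (ε : ℝ) (hε : 0 < ε) :
    ∃ b : ℕ, m < a + b * r ∧
      |(σ (a + b * r) : ℝ) / (a + b * r) - 1 / 2| < ε :=
  sigma_ratio_near_half_general i σ hipos hieven higrow hσ a r hr m ε hε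
end

section
/- With σ as defined from the sequence (i_j): for every a ∈ ℕ and every positive integer r, and for all m > 0 and ε > 0, there exists a positive integer n of the form n = a + br with b ∈ ℕ such that n > m and 0 < σ(n)/n < ε. -/
/-!
Take `j` large and let `n` be the largest term of the progression `a + b r` below `i (j+1)`.
Then `n` lies in the block `[i j, i (j+1))`, so `σ n = i j / 2`, while `n > i (j+1) - r`
exceeds `2^j · i j - r`; hence `σ n / n < 1 / 2^j` as soon as `2^j ≥ r`.
-/

open Filter

lemma two_le_of_growth {i : ℕ → ℕ} (hi1 : i 1 = 2)
    (higrow : ∀ j, 1 ≤ j → 2 ^ j * i j < i (j + 1)) : ∀ j, 1 ≤ j → 2 ≤ i j := by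
  intro j hj
  induction j, hj using Nat.le_induction with
  | base => omega
  | succ k hk ih =>
    have := higrow k hk
    have := Nat.one_le_two_pow (n := k)
    nlinarith

lemma exists_add_mul_lt_le_add {a r N : ℕ} (hr : 0 < r) (haN : a < N) :
    ∃ b, a + b * r < N ∧ N ≤ a + b * r + r := by
  refine ⟨(N - 1 - a) / r, ?_, ?_⟩
  · have := Nat.div_mul_le_self (N - 1 - a) r
    omega
  · have := Nat.lt_div_mul_add (a := N - 1 - a) hr
    omega

lemma sigma_near_block_end {i σ : ℕ → ℕ}
    (hσ : ∀ j n, 1 ≤ j → i j ≤ n → n < i (j + 1) → σ n = i j / 2) {j n r : ℕ} (hj : 1 ≤ j)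
    (hij : 2 ≤ i j) (hgrow : 2 ^ j * i j < i (j + 1)) (hr : r ≤ 2 ^ j)
    (hn : n < i (j + 1)) (hnr : i (j + 1) ≤ n + r) :
    2 ^ j < n ∧ 0 < σ n ∧ σ n * 2 ^ j < n := by
  have h2j : 2 ≤ 2 ^ j := by simpa using Nat.pow_le_pow_right two_pos hj
  have hσn : σ n = i j / 2 := hσ j n hj (by nlinarith) hn
  have hσpos : 0 < σ n := by rw [hσn]; omega
  have hσi : σ n * 2 ≤ i j := hσn ▸ Nat.div_mul_le_self _ _
  -- `2 σ n 2^j ≤ 2^j i j < n + r ≤ n + σ n 2^j`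
  exact ⟨by nlinarith, hσpos, by nlinarith⟩

theorem sigma_ratio_near_zero_general (i σ : ℕ → ℕ)
    (hi1 : i 1 = 2)
    (higrow : ∀ j, 1 ≤ j → 2 ^ j * i j < i (j + 1))
    (hσ : ∀ j n, 1 ≤ j → i j ≤ n → n < i (j + 1) → σ n = i j / 2)
    (a : ℕ) (r : ℕ) (hr : 0 < r) (m : ℕ) (ε : ℝ) (hε : 0 < ε) :
    ∃ b : ℕ, m < a + b * r ∧
      0 < (σ (a + b * r) : ℝ) / (a + b * r) ∧
      (σ (a + b * r) : ℝ) / (a + b * r) < ε := by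
  obtain ⟨j, hj, hpow, hεj⟩ : ∃ j, 1 ≤ j ∧ a + m + r ≤ 2 ^ j ∧ (1 / 2 : ℝ) ^ j < ε :=
    ((eventually_ge_atTop 1).and
      (((tendsto_pow_atTop_atTop_of_one_lt one_lt_two).eventually_ge_atTop _).and
        ((tendsto_pow_atTop_nhds_zero_of_lt_one (by norm_num) (by norm_num)).eventually
          (gt_mem_nhds hε)))).exists
  have hij := two_le_of_growth hi1 higrow j hj
  have hgrow := higrow j hj
  obtain ⟨b, hbN, hNb⟩ := exists_add_mul_lt_le_add hr (show a < i (j + 1) by nlinarith)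
  obtain ⟨hn, hσpos, hσn⟩ := sigma_near_block_end hσ hj hij hgrow (by omega) hbN hNb
  have hn0 : (0 : ℝ) < a + b * r := by exact_mod_cast (by omega : 0 < a + b * r)
  refine ⟨b, by omega, div_pos (by exact_mod_cast hσpos) hn0, ?_⟩
  calc (σ (a + b * r) : ℝ) / (a + b * r) < 1 / 2 ^ j := by
        rw [div_lt_div_iff₀ hn0 (by positivity), one_mul]
        exact_mod_cast hσn
    _ = (1 / 2) ^ j := (one_div_pow 2 j).symm
    _ < ε := hεj

theorem sigma_ratio_near_zero (i σ : ℕ → ℕ)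
    (hipos : ∀ j, 1 ≤ j → 0 < i j)
    (hi1 : i 1 = 2)
    (hieven : ∀ j, 1 ≤ j → Even (i (j + 1)))
    (higrow : ∀ j, 1 ≤ j → 2 ^ j * i j < i (j + 1))
    (hσ1 : σ 1 = 1)
    (hσ : ∀ j n, 1 ≤ j → i j ≤ n → n < i (j + 1) → σ n = i j / 2)
    (a : ℕ) (r : ℕ) (hr : 0 < r) (m : ℕ) (hm : 0 < m) (ε : ℝ) (hε : 0 < ε) :
    ∃ b : ℕ, m < a + b * r ∧
      0 < (σ (a + b * r) : ℝ) / (a + b * r) ∧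
      (σ (a + b * r) : ℝ) / (a + b * r) < ε :=
  sigma_ratio_near_zero_general i σ hi1 higrow hσ a r hr m ε hε
end

section
/- With σ as defined from the sequence (i_j): for every a ∈ ℕ and every positive integer r, the limit lim_{b→∞} σ(a+br)/(a+br) does not exist; that is, the sequence σ(n)/n has no limit even when n is constrained to lie in any arithmetic sequence a + br. -/
/-!
Since `i (j + 1) > 2 ^ j * i j`, the function `σ` is constant, equal to about `i j / 2`, on a
block `[i j, i (j + 1))` whose right end is much larger than its left end. So `σ n / n` is at
least `1 / 8` near the start of every late block and at most `1 / 16` near its end. Each such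
stretch has length at least `r`, hence contains a term of the progression `a + b * r`, and both
inequalities hold for arbitrarily large `b`.
-/

open Filter Set

lemma exists_add_mul_mem_Ico {a r m : ℕ} (hr : 0 < r) (ham : a ≤ m) :
    ∃ b, a + b * r ∈ Ico m (m + r) := by
  obtain ⟨q, u, hu, hqu⟩ : ∃ q u, u < r ∧ m - a + r - 1 = r * q + u :=
    ⟨_, _, Nat.mod_lt _ hr, (Nat.div_add_mod _ r).symm⟩
  refine ⟨q, ?_, ?_⟩ <;> rw [Nat.mul_comm q r] <;> omega

lemma frequently_add_mul_of_windows {P : ℕ → Prop} {a r : ℕ} (hr : 0 < r)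
    (hP : ∀ m, ∃ m' ≥ m, ∀ n ∈ Ico m' (m' + r), P n) :
    ∃ᶠ b in atTop, P (a + b * r) := by
  refine frequently_atTop.2 fun N => ?_
  obtain ⟨m', hm', hPm'⟩ := hP (a + N * r)
  obtain ⟨b, hb⟩ := exists_add_mul_mem_Ico hr hm'
  exact ⟨N + b, Nat.le_add_right N b, hPm' _ (by rwa [add_mul, ← add_assoc])⟩

section Blocks

variable {i σ : ℕ → ℕ}

lemma lt_apply_add_two (hipos : ∀ j, 1 ≤ j → 0 < i j)
    (higrow : ∀ j, 1 ≤ j → 2 ^ j * i j < i (j + 1)) (N : ℕ) : N < i (N + 2) :=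
  calc N < 2 ^ (N + 1) :=
        Nat.lt_two_pow_self.trans (Nat.pow_lt_pow_right one_lt_two N.lt_succ_self)
    _ ≤ 2 ^ (N + 1) * i (N + 1) := Nat.le_mul_of_pos_right _ (hipos _ (by omega))
    _ < i (N + 2) := higrow _ (by omega)

variable (higrow : ∀ j, 1 ≤ j → 2 ^ j * i j < i (j + 1))
  (hσ : ∀ j n, 1 ≤ j → i j ≤ n → n < i (j + 1) → σ n = i j / 2)
include higrow hσ

lemma ratio_ge_of_mem_Ico_block_start {j r n : ℕ} (hj : 1 ≤ j) (hr : r ≤ i j) (h2 : 2 ≤ i j)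
    (hn : n ∈ Ico (i j) (i j + r)) : 1 / 8 ≤ (σ n : ℝ) / n := by
  obtain ⟨hn₁, hn₂⟩ := hn
  have hblock : 2 * i j ≤ 2 ^ j * i j :=
    Nat.mul_le_mul_right _ (by simpa using Nat.pow_le_pow_right two_pos hj)
  have hσn := hσ j n hj hn₁ (by linarith [higrow j hj])
  rw [div_le_div_iff₀ (by norm_num) (by exact_mod_cast (by omega : 0 < n))]
  exact_mod_cast (by omega : 1 * n ≤ σ n * 8)

lemma ratio_le_of_mem_Ico_block_end {j r n : ℕ} (hj : 1 ≤ j) (hr : r ≤ i j) (hpos : 0 < i j)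
    (h9 : 9 ≤ 2 ^ j) (hn : n ∈ Ico (i (j + 1) - r) (i (j + 1))) : (σ n : ℝ) / n ≤ 1 / 16 := by
  obtain ⟨hn₁, hn₂⟩ := hn
  have hgap : 9 * i j ≤ 2 ^ j * i j := Nat.mul_le_mul_right _ h9
  have hgrow := higrow j hj
  have hσn := hσ j n hj (by omega) hn₂
  rw [div_le_div_iff₀ (by exact_mod_cast (by omega : 0 < n)) (by norm_num)]
  exact_mod_cast (by omega : σ n * 16 ≤ 1 * n)

variable (hipos : ∀ j, 1 ≤ j → 0 < i j)
include hipos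

lemma exists_window_ratio_ge (r m : ℕ) :
    ∃ m' ≥ m, ∀ n ∈ Ico m' (m' + r), 1 / 8 ≤ (σ n : ℝ) / n := by
  have hlt := lt_apply_add_two hipos higrow (m + r + 2)
  exact ⟨i (m + r + 2 + 2), by omega, fun n hn =>
    ratio_ge_of_mem_Ico_block_start higrow hσ (by omega) (by omega) (by omega) hn⟩

lemma exists_window_ratio_le (r m : ℕ) :
    ∃ m' ≥ m, ∀ n ∈ Ico m' (m' + r), (σ n : ℝ) / n ≤ 1 / 16 := by
  have hlt := lt_apply_add_two hipos higrow (m + r + 9)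
  set j := m + r + 9 + 2
  have h9 : 9 ≤ 2 ^ j := by have := j.lt_two_pow_self; omega
  have hgap : 9 * i j ≤ 2 ^ j * i j := Nat.mul_le_mul_right _ h9
  have hgrow := higrow j (by omega)
  refine ⟨i (j + 1) - r, by omega, fun n ⟨hn₁, hn₂⟩ => ?_⟩
  exact ratio_le_of_mem_Ico_block_end higrow hσ (by omega) (by omega) (by omega) h9
    ⟨hn₁, by omega⟩

end Blocks

theorem sigma_ratio_no_limit_on_arithmetic_sequences_general (i σ : ℕ → ℕ)
    (hipos : ∀ j, 1 ≤ j → 0 < i j)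
    (higrow : ∀ j, 1 ≤ j → 2 ^ j * i j < i (j + 1))
    (hσ : ∀ j n, 1 ≤ j → i j ≤ n → n < i (j + 1) → σ n = i j / 2)
    (a : ℕ) (r : ℕ) (hr : 0 < r) :
    ¬ ∃ c : ℝ, Tendsto (fun b : ℕ => (σ (a + b * r) : ℝ) / (a + b * r)) atTop (nhds c) := by
  rintro ⟨c, hc⟩
  have hge : ∃ᶠ b in atTop, 1 / 8 ≤ (σ (a + b * r) : ℝ) / (a + b * r) := by
    simpa only [Nat.cast_add, Nat.cast_mul] using
      frequently_add_mul_of_windows (a := a) hr (exists_window_ratio_ge higrow hσ hipos r)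
  have hle : ∃ᶠ b in atTop, (σ (a + b * r) : ℝ) / (a + b * r) ≤ 1 / 16 := by
    simpa only [Nat.cast_add, Nat.cast_mul] using
      frequently_add_mul_of_windows (a := a) hr (exists_window_ratio_le higrow hσ hipos r)
  have h8 : 1 / 8 ≤ c := isClosed_Ici.mem_of_frequently_of_tendsto hge hc
  have h16 : c ≤ 1 / 16 := isClosed_Iic.mem_of_frequently_of_tendsto hle hc
  linarith

theorem sigma_ratio_no_limit_on_arithmetic_sequences (i σ : ℕ → ℕ)
    (hipos : ∀ j, 1 ≤ j → 0 < i j)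
    (hi1 : i 1 = 2)
    (hieven : ∀ j, 1 ≤ j → Even (i (j + 1)))
    (higrow : ∀ j, 1 ≤ j → 2 ^ j * i j < i (j + 1))
    (hσ1 : σ 1 = 1)
    (hσ : ∀ j n, 1 ≤ j → i j ≤ n → n < i (j + 1) → σ n = i j / 2)
    (a : ℕ) (r : ℕ) (hr : 0 < r) :
    ¬ ∃ c : ℝ, Tendsto (fun b : ℕ => (σ (a + b * r) : ℝ) / (a + b * r)) atTop (nhds c) :=
  sigma_ratio_no_limit_on_arithmetic_sequences_general i σ hipos higrow hσ a r hr
end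

section
/- Let d ≥ 1 and define f(n) = C(d+n, d) + C(d+n+σ(n)−1, d) for positive integers n. Then for every a ∈ ℕ and every positive integer r, the limit lim_{b→∞} f(a+br)/(a+br)^d does not exist. (Consequently, for the graded linear series L on the double hyperplane X = Proj(k[x_0,…,x_{d+1}]/(x_1²)) with dim_k L_n = f(n), the limit of dim_k L_n / n^d does not exist even when n is constrained to lie in any arithmetic sequence.) -/
/-!
Since `d! · C(d + m, d) ∼ m ^ d`, along any sequence `n → ∞` with `σ n / n → s` the quantity
`d! · f n / n ^ d` tends to `1 + (1 + s) ^ d`. Every window of `r` consecutive integers beyond `a`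
contains a term of the progression `a + b r`. Terms just above `i j` have `σ = i j / 2`, so
`s = 1 / 2`; terms just below `i (j + 1)` still have `σ = i j / 2 < i (j + 1) / 2 ^ j`, so `s = 0`.
The two limits `1 + (3 / 2) ^ d` and `2` differ as soon as `d ≥ 1`.
-/

open Filter Topology Finset Nat

section

variable {ι : Type*} {l : Filter ι}

lemma tendsto_div_of_abs_sub_mul_le {x y : ι → ℝ} {t C : ℝ} (hy : Tendsto y l atTop)
    (h : ∀ᶠ k in l, |x k - t * y k| ≤ C) : Tendsto (fun k => x k / y k) l (𝓝 t) := by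
  have hsmall : Tendsto (fun k => (x k - t * y k) / y k) l (𝓝 0) :=
    squeeze_zero_norm' ((h.and (hy.eventually_gt_atTop 0)).mono fun k ⟨hk, hy⟩ => by
      rw [Real.norm_eq_abs, abs_div, abs_of_pos hy]; gcongr) (hy.const_div_atTop C)
  refine (by simpa using hsmall.const_add t : Tendsto _ l (𝓝 t)).congr' ?_
  filter_upwards [hy.eventually_gt_atTop 0] with k hk
  field_simp
  ring

lemma tendsto_add_const_div {m n : ι → ℕ} {t : ℝ} (c : ℝ) (hn : Tendsto n l atTop)
    (hmn : Tendsto (fun k => (m k : ℝ) / n k) l (𝓝 t)) :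
    Tendsto (fun k => ((m k : ℝ) + c) / n k) l (𝓝 t) := by
  have hc : Tendsto (fun k => c / (n k : ℝ)) l (𝓝 0) :=
    (tendsto_natCast_atTop_atTop.comp hn).const_div_atTop c
  simpa [add_div] using hmn.add hc

lemma tendsto_choose_div_pow (d : ℕ) {m n : ι → ℕ} {t : ℝ} (hn : Tendsto n l atTop)
    (hmn : Tendsto (fun k => (m k : ℝ) / n k) l (𝓝 t)) :
    Tendsto (fun k => ((d + m k).choose d : ℝ) / (n k : ℝ) ^ d) l (𝓝 (t ^ d / d !)) := by
  have hlim (c : ℝ) : Tendsto (fun k => (((m k : ℝ) + c) / n k) ^ d / d !) l (𝓝 (t ^ d / d !)) :=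
    ((tendsto_add_const_div c hn hmn).pow d).div_const _
  refine tendsto_of_tendsto_of_tendsto_of_le_of_le' (hlim 1) (hlim d) ?_ ?_
  all_goals
    filter_upwards [hn.eventually_gt_atTop 0] with k hk
    rw [div_pow, div_div, mul_comm, ← div_div]
    gcongr
  · simpa [show d + m k + 1 - d = m k + 1 by omega] using Nat.pow_le_choose (α := ℝ) d (d + m k)
  · simpa [add_comm] using Nat.choose_le_pow_div (α := ℝ) d (d + m k)

lemma tendsto_choose_add_choose_div_pow (d : ℕ) {n x : ι → ℕ} {s : ℝ} (hn : Tendsto n l atTop)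
    (hxn : Tendsto (fun k => (x k : ℝ) / n k) l (𝓝 s)) :
    Tendsto (fun k =>
        (((d + n k).choose d + (d + n k + x k - 1).choose d : ℕ) : ℝ) / (n k : ℝ) ^ d)
      l (𝓝 ((1 + (1 + s) ^ d) / d !)) := by
  have hself : Tendsto (fun k => (n k : ℝ) / n k) l (𝓝 1) :=
    tendsto_const_nhds.congr' <| (hn.eventually_gt_atTop 0).mono fun k hk => by
      field_simp
  have hsum : Tendsto (fun k => ((n k + x k : ℕ) : ℝ) / n k) l (𝓝 (1 + s)) := by
    simpa [add_div] using hself.add hxn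
  have hshift : Tendsto (fun k => ((n k + x k - 1 : ℕ) : ℝ) / n k) l (𝓝 (1 + s)) := by
    refine (tendsto_add_const_div (-1) hn hsum).congr' ?_
    filter_upwards [hn.eventually_gt_atTop 0] with k hk
    rw [Nat.cast_sub (by omega)]
    push_cast
    ring
  have hadd := (tendsto_choose_div_pow d hn hself).add (tendsto_choose_div_pow d hn hshift)
  rw [one_pow, ← add_div] at hadd
  refine hadd.congr' ?_
  filter_upwards [hn.eventually_gt_atTop 0] with k hk
  rw [show d + n k + x k - 1 = d + (n k + x k - 1) by omega]
  push_cast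
  ring

lemma exists_tendsto_comp_of_tendsto_add_mul {α : Type*} {F : ℕ → α} {lF : Filter α} {a r : ℕ}
    (hr : 0 < r) (hF : Tendsto (fun b => F (a + b * r)) atTop lF) {m : ι → ℕ}
    (hm : Tendsto m l atTop) :
    ∃ n : ι → ℕ, (∀ᶠ k in l, n k ∈ Ico (m k) (m k + r)) ∧ Tendsto (fun k => F (n k)) l lF := by
  set idx : ℕ → ℕ := fun m => (m - a + r - 1) / r
  have hidx : Tendsto idx atTop atTop := by
    refine tendsto_atTop_atTop.2 fun B => ⟨a + B * r, fun m hm => ?_⟩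
    exact (Nat.le_div_iff_mul_le hr).2 (by omega)
  refine ⟨fun k => a + idx (m k) * r, ?_, hF.comp (hidx.comp hm)⟩
  filter_upwards [hm.eventually_ge_atTop a] with k hk
  have := Nat.div_add_mod (m k - a + r - 1) r
  have := Nat.mod_lt (m k - a + r - 1) hr
  simp only [mem_Ico, idx, mul_comm _ r]
  omega

end

section FastGrowth

variable {i σ : ℕ → ℕ}

lemma tendsto_atTop_of_two_pow_mul_lt (higrow : ∀ j, 1 ≤ j → 2 ^ j * i j < i (j + 1)) :
    Tendsto i atTop atTop := by
  refine (tendsto_add_atTop_iff_nat 1).1 (StrictMono.tendsto_atTop (strictMono_nat_of_lt_succ ?_))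
  intro k
  exact (Nat.le_mul_of_pos_left _ (by positivity)).trans_lt (higrow (k + 1) (by omega))

lemma eventually_add_le_of_two_pow_mul_lt (higrow : ∀ j, 1 ≤ j → 2 ^ j * i j < i (j + 1))
    (K : ℕ) : ∀ᶠ j in atTop, i j + K ≤ i (j + 1) := by
  filter_upwards [eventually_ge_atTop 1,
    (tendsto_atTop_of_two_pow_mul_lt higrow).eventually_ge_atTop K] with j hj hK
  have : 2 * i j ≤ 2 ^ j * i j := Nat.mul_le_mul_right _ (Nat.le_self_pow (by omega) 2)
  have := higrow j hj
  omega

lemma tendsto_sigma_div_of_mem_Ico_start (higrow : ∀ j, 1 ≤ j → 2 ^ j * i j < i (j + 1))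
    (hσ : ∀ j n, 1 ≤ j → i j ≤ n → n < i (j + 1) → σ n = i j / 2) {n : ℕ → ℕ} {r : ℕ}
    (hn : ∀ᶠ j in atTop, n j ∈ Ico (i j) (i j + r)) :
    Tendsto (fun j => (σ (n j) : ℝ) / n j) atTop (𝓝 (1 / 2)) := by
  have hnt : Tendsto n atTop atTop := tendsto_atTop_mono' _
    (hn.mono fun j h => (mem_Ico.1 h).1) (tendsto_atTop_of_two_pow_mul_lt higrow)
  refine tendsto_div_of_abs_sub_mul_le (C := r + 1) (tendsto_natCast_atTop_atTop.comp hnt) ?_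
  filter_upwards [hn, eventually_ge_atTop 1, eventually_add_le_of_two_pow_mul_lt higrow r]
    with j hnj hj hgap
  rw [mem_Ico] at hnj
  rw [hσ j (n j) hj hnj.1 (by omega)]
  have h1 : ((2 * (i j / 2) : ℕ) : ℝ) ≤ n j := by exact_mod_cast (by omega : 2 * (i j / 2) ≤ n j)
  have h2 : (n j : ℝ) ≤ ((2 * (i j / 2) + r + 1 : ℕ) : ℝ) := by
    exact_mod_cast (by omega : n j ≤ 2 * (i j / 2) + r + 1)
  push_cast at h1 h2
  rw [abs_le]
  constructor <;> linarith

lemma tendsto_sigma_div_of_mem_Ico_end (higrow : ∀ j, 1 ≤ j → 2 ^ j * i j < i (j + 1))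
    (hσ : ∀ j n, 1 ≤ j → i j ≤ n → n < i (j + 1) → σ n = i j / 2) {n : ℕ → ℕ} {r : ℕ}
    (hn : ∀ᶠ j in atTop, n j ∈ Ico (i (j + 1) - r) (i (j + 1))) :
    Tendsto (fun j => (σ (n j) : ℝ) / n j) atTop (𝓝 0) := by
  have hbound : Tendsto (fun j : ℕ => ((r + 1 : ℕ) : ℝ) / 2 ^ j) atTop (𝓝 0) :=
    tendsto_const_nhds.div_atTop (tendsto_pow_atTop_atTop_of_one_lt one_lt_two)
  refine tendsto_of_tendsto_of_tendsto_of_le_of_le' tendsto_const_nhds hbound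
    (Eventually.of_forall fun j => by positivity) ?_
  filter_upwards [hn, eventually_ge_atTop 1, eventually_add_le_of_two_pow_mul_lt higrow r,
    (tendsto_atTop_of_two_pow_mul_lt higrow).eventually_ge_atTop 1] with j hnj hj hgap hi1
  rw [mem_Ico] at hnj
  rw [hσ j (n j) hj (by omega) (by omega), div_le_div_iff₀ (by norm_cast; omega) (by positivity)]
  have := higrow j hj
  have : r ≤ r * n j := Nat.le_mul_of_pos_right r (by omega)
  have key : i j / 2 * 2 ^ j ≤ (r + 1) * n j :=
    calc i j / 2 * 2 ^ j ≤ 2 ^ j * i j := by rw [mul_comm]; gcongr; exact Nat.div_le_self _ _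
      _ ≤ r * n j + n j := by omega
      _ = (r + 1) * n j := by ring
  exact_mod_cast key

end FastGrowth

theorem binomial_growth_no_limit_on_arithmetic_sequences_general (i σ : ℕ → ℕ)
    (higrow : ∀ j, 1 ≤ j → 2 ^ j * i j < i (j + 1))
    (hσ : ∀ j n, 1 ≤ j → i j ≤ n → n < i (j + 1) → σ n = i j / 2)
    (d : ℕ) (hd : 1 ≤ d)
    (f : ℕ → ℕ)
    (hf : ∀ n, f n = (d + n).choose d + (d + n + σ n - 1).choose d)
    (a : ℕ) (r : ℕ) (hr : 0 < r) :
    ¬ ∃ c : ℝ, Tendsto (fun b : ℕ => (f (a + b * r) : ℝ) / (a + b * r) ^ d)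
        atTop (nhds c) := by
  rintro ⟨c, hc⟩
  set F : ℕ → ℝ := fun n => (f n : ℝ) / (n : ℝ) ^ d
  have hF : Tendsto (fun b => F (a + b * r)) atTop (𝓝 c) := by simpa [F] using hc
  have hlimit {n m : ℕ → ℕ} {s : ℝ} (hm : Tendsto m atTop atTop)
      (hnm : ∀ᶠ j in atTop, n j ∈ Ico (m j) (m j + r))
      (hs : Tendsto (fun j => (σ (n j) : ℝ) / n j) atTop (𝓝 s)) :
      Tendsto (fun j => F (n j)) atTop (𝓝 ((1 + (1 + s) ^ d) / d !)) := by
    have hn : Tendsto n atTop atTop :=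
      tendsto_atTop_mono' _ (hnm.mono fun j h => (mem_Ico.1 h).1) hm
    simpa only [F, hf] using tendsto_choose_add_choose_div_pow d hn hs
  have hi := tendsto_atTop_of_two_pow_mul_lt higrow
  have hi' : Tendsto (fun j => i (j + 1) - r) atTop atTop :=
    (tendsto_sub_atTop_nat r).comp (hi.comp (tendsto_add_atTop_nat 1))
  obtain ⟨nA, hnA, hcA⟩ := exists_tendsto_comp_of_tendsto_add_mul hr hF hi
  obtain ⟨nB, hnB, hcB⟩ := exists_tendsto_comp_of_tendsto_add_mul hr hF hi'
  have hnB' : ∀ᶠ j in atTop, nB j ∈ Ico (i (j + 1) - r) (i (j + 1)) := by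
    filter_upwards [hnB, (hi.comp (tendsto_add_atTop_nat 1)).eventually_ge_atTop r] with j hj hjr
    simp only [mem_Ico, Function.comp] at hj hjr ⊢
    omega
  have hA := tendsto_nhds_unique hcA
    (hlimit hi hnA (tendsto_sigma_div_of_mem_Ico_start higrow hσ hnA))
  have hB := tendsto_nhds_unique hcB
    (hlimit hi' hnB (tendsto_sigma_div_of_mem_Ico_end higrow hσ hnB'))
  rw [hA, add_zero, one_pow, div_left_inj' (by positivity)] at hB
  linarith [one_lt_pow₀ (by norm_num : (1 : ℝ) < 1 + 1 / 2) (by omega : d ≠ 0)]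

theorem binomial_growth_no_limit_on_arithmetic_sequences (i σ : ℕ → ℕ)
    (hipos : ∀ j, 1 ≤ j → 0 < i j)
    (hi1 : i 1 = 2)
    (hieven : ∀ j, 1 ≤ j → Even (i (j + 1)))
    (higrow : ∀ j, 1 ≤ j → 2 ^ j * i j < i (j + 1))
    (hσ1 : σ 1 = 1)
    (hσ : ∀ j n, 1 ≤ j → i j ≤ n → n < i (j + 1) → σ n = i j / 2)
    (d : ℕ) (hd : 1 ≤ d)
    (f : ℕ → ℕ)
    (hf : ∀ n, f n = (d + n).choose d + (d + n + σ n - 1).choose d)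
    (a : ℕ) (r : ℕ) (hr : 0 < r) :
    ¬ ∃ c : ℝ, Tendsto (fun b : ℕ => (f (a + b * r) : ℝ) / (a + b * r) ^ d)
        atTop (nhds c) :=
  binomial_growth_no_limit_on_arithmetic_sequences_general i σ higrow hσ d hd f hf a r hr
end
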